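/- arXiv:2004.10053 — 4 statements merged into one kernel-verified Lean document; each statement's English description precedes it below -/
import Mathlib

section
/- Let R1, R2 > 0 and let x1, x2 be points of the Euclidean plane ℝ² with r = ‖x1 − x2‖ satisfying |R1 − R2| ≤ r and r ≤ R1 + R2 and r > 0. Then the area of the intersection b(x1,R1) ∩ b(x2,R2) equals R1²·arccos((r² + R1² − R2²)/(2 r R1)) + R2²·arccos((r² + R2² − R1²)/(2 r R2)) − t/2, where t = √((R1+R2+r)(R1+R2−r)(R1−R2+r)(−R1+R2+r)). -/
/-!
Move the centres to `(0, 0)` and `(r, 0)` by an isometry. The radical line `x = d`, where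
`d = (r² + R₁² - R₂²) / (2r)`, cuts the lens into two circular segments, and by Fubini a segment of
the disc of radius `R` beyond the chord at distance `a` from the centre has area
`∫ x in a..R, 2√(R² - x²) = R² arccos (a / R) - a √(R² - a²)`. The common chord has half-length
`√(R₁² - d²) = √P / (2r)`, with `P` the product under the square root (Heron), so the two
correction terms add up to `(d + (r - d)) · √P / (2r) = √P / 2`.
-/

open MeasureTheory Real Set Metric

-- For `c < 0` both sides vanish, since then `√c = 0`.
theorem volume_setOf_sq_le (c : ℝ) : volume {y : ℝ | y ^ 2 ≤ c} = ENNReal.ofReal (2 * √c) := by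
  rcases le_or_gt 0 c with hc | hc
  · have : {y : ℝ | y ^ 2 ≤ c} = Icc (-√c) √c := by ext y; simp [Real.sq_le hc]
    rw [this, Real.volume_Icc]
    ring_nf
  · have : {y : ℝ | y ^ 2 ≤ c} = ∅ := by
      ext y
      simp only [mem_ofPred_eq, mem_empty_iff_false, iff_false, not_le]
      nlinarith [sq_nonneg y]
    simp [this, Real.sqrt_eq_zero_of_nonpos hc.le]

theorem volume_setOf_snd_sq_le {f : ℝ → ℝ} (hf : Measurable f) :
    volume {p : ℝ × ℝ | p.2 ^ 2 ≤ f p.1} = ∫⁻ x, ENNReal.ofReal (2 * √(f x)) := by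
  rw [Measure.volume_eq_prod, Measure.prod_apply (measurableSet_le (by fun_prop) (by fun_prop))]
  simp_rw [← volume_setOf_sq_le]
  rfl

theorem toReal_volume_setOf_snd_sq_le {f : ℝ → ℝ} (hf : Continuous f) {a b : ℝ} (hab : a ≤ b)
    (hf_nonpos : ∀ x ∉ Icc a b, f x ≤ 0) :
    (volume {p : ℝ × ℝ | p.2 ^ 2 ≤ f p.1}).toReal = ∫ x in a..b, 2 * √(f x) := by
  have hsupp : (fun x ↦ ENNReal.ofReal (2 * √(f x))).support ⊆ Icc a b := fun x hx ↦ by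
    by_contra h
    simp [Real.sqrt_eq_zero_of_nonpos (hf_nonpos x h)] at hx
  rw [volume_setOf_snd_sq_le hf.measurable, ← setLIntegral_eq_of_support_subset hsupp,
    ← ofReal_integral_eq_lintegral_ofReal _ (.of_forall fun x ↦ by positivity),
    ENNReal.toReal_ofReal (setIntegral_nonneg measurableSet_Icc fun x _ ↦ by positivity),
    integral_Icc_eq_integral_Ioc, intervalIntegral.integral_of_le hab]
  exact (by fun_prop : Continuous fun x ↦ 2 * √(f x)).continuousOn.integrableOn_Icc

theorem integral_two_mul_sqrt_sq_sub_sq {R a : ℝ} (hR : 0 < R) (ha : -R ≤ a) (ha' : a ≤ R) :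
    ∫ x in a..R, 2 * √(R ^ 2 - x ^ 2) = R ^ 2 * arccos (a / R) - a * √(R ^ 2 - a ^ 2) := by
  set F : ℝ → ℝ := fun y ↦ y * √(R ^ 2 - y ^ 2) - R ^ 2 * arccos (y / R)
  have hderiv : ∀ x ∈ Ioo a R, HasDerivAt F (2 * √(R ^ 2 - x ^ 2)) x := by
    intro x ⟨hax, hxR⟩
    have hpos : 0 < R ^ 2 - x ^ 2 := by nlinarith
    have hx₁ : x / R ≠ -1 := by rw [Ne, div_eq_iff hR.ne']; linarith
    have hx₂ : x / R ≠ 1 := by rw [Ne, div_eq_iff hR.ne']; linarith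
    have hsqrt : √(1 - (x / R) ^ 2) = √(R ^ 2 - x ^ 2) / R := by
      rw [show 1 - (x / R) ^ 2 = (R ^ 2 - x ^ 2) / R ^ 2 by field_simp, Real.sqrt_div hpos.le,
        Real.sqrt_sq hR.le]
    have := ((hasDerivAt_id x).mul (((hasDerivAt_pow 2 x).const_sub (R ^ 2)).sqrt hpos.ne')).sub
      (((Real.hasDerivAt_arccos hx₁ hx₂).comp x ((hasDerivAt_id x).div_const R)).const_mul (R ^ 2))
    refine this.congr_deriv ?_
    rw [hsqrt, id]
    field_simp
    linear_combination (-(2:ℝ)) * Real.sq_sqrt hpos.le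
  rw [intervalIntegral.integral_eq_sub_of_hasDerivAt_of_le ha' (by fun_prop) hderiv
    ((by fun_prop : Continuous fun x ↦ 2 * √(R ^ 2 - x ^ 2)).intervalIntegrable _ _)]
  simp [F, hR.ne']

section InnerProductSpace

variable {E : Type*} [NormedAddCommGroup E] [InnerProductSpace ℝ E] [FiniteDimensional ℝ E]
  [MeasurableSpace E] [BorelSpace E]

theorem volume_closedBall_inter_closedBall_eq_of_norm_eq {x₁ x₂ w : E} (hw : ‖w‖ = dist x₁ x₂)
    (R₁ R₂ : ℝ) :
    volume (closedBall x₁ R₁ ∩ closedBall x₂ R₂) = volume (closedBall 0 R₁ ∩ closedBall w R₂) := by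
  have hnorm : ‖x₂ - x₁‖ = ‖w‖ := by rw [hw, dist_comm, dist_eq_norm]
  set L := Submodule.reflection (ℝ ∙ (x₂ - x₁ - w))ᗮ
  have hL : L (x₂ - x₁) = w := Submodule.reflection_sub hnorm
  set g : E → E := fun p ↦ L (p - x₁)
  have hg : Isometry g := L.isometry.comp (IsometryEquiv.subRight x₁).isometry
  have hg_mp : MeasurePreserving g volume volume :=
    L.measurePreserving.comp (measurePreserving_sub_right volume x₁)
  have hpre : g ⁻¹' (closedBall 0 R₁ ∩ closedBall w R₂) = closedBall x₁ R₁ ∩ closedBall x₂ R₂ := by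
    have h₁ : g x₁ = 0 := by simp [g]
    rw [preimage_inter, ← h₁, ← hL, hg.preimage_closedBall, hg.preimage_closedBall]
  rw [← hpre, hg_mp.measure_preimage
    (measurableSet_closedBall.inter measurableSet_closedBall).nullMeasurableSet]

end InnerProductSpace

def lens (R₁ R₂ r : ℝ) : Set (ℝ × ℝ) :=
  {p | p.1 ^ 2 + p.2 ^ 2 ≤ R₁ ^ 2 ∧ (p.1 - r) ^ 2 + p.2 ^ 2 ≤ R₂ ^ 2}

theorem volume_closedBall_zero_inter_closedBall_single {R₁ R₂ : ℝ} (hR₁ : 0 ≤ R₁) (hR₂ : 0 ≤ R₂)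
    (r : ℝ) :
    volume (closedBall (0 : EuclideanSpace ℝ (Fin 2)) R₁ ∩
      closedBall (EuclideanSpace.single 0 r) R₂) = volume (lens R₁ R₂ r) := by
  set Φ : EuclideanSpace ℝ (Fin 2) → ℝ × ℝ :=
    MeasurableEquiv.finTwoArrow ∘ (MeasurableEquiv.toLp 2 (Fin 2 → ℝ)).symm
  have hΦ : MeasurePreserving Φ volume volume :=
    (volume_preserving_finTwoArrow ℝ).comp
      (EuclideanSpace.volume_preserving_symm_measurableEquiv_toLp (Fin 2))
  have hpre : Φ ⁻¹' lens R₁ R₂ r = closedBall 0 R₁ ∩ closedBall (EuclideanSpace.single 0 r) R₂ := by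
    ext p
    simp [Φ, lens, EuclideanSpace.norm_eq, EuclideanSpace.dist_eq, Fin.sum_univ_two,
      Real.sqrt_le_left, hR₁, hR₂, Real.dist_eq]
  have hlens : MeasurableSet (lens R₁ R₂ r) :=
    (measurableSet_le (f := fun p : ℝ × ℝ ↦ p.1 ^ 2 + p.2 ^ 2) (by fun_prop) measurable_const).inter
      (measurableSet_le (f := fun p : ℝ × ℝ ↦ (p.1 - r) ^ 2 + p.2 ^ 2) (by fun_prop)
        measurable_const)
  rw [← hpre, hΦ.measure_preimage hlens.nullMeasurableSet]

theorem toReal_volume_lens_eq_add {R₁ R₂ r d : ℝ} (hR₁ : 0 < R₁) (hR₂ : 0 < R₂) (hr : 0 < r)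
    (h₁ : |R₁ - R₂| ≤ r) (h₂ : r ≤ R₁ + R₂) (hd : R₁ ^ 2 - d ^ 2 = R₂ ^ 2 - (d - r) ^ 2) :
    (volume (lens R₁ R₂ r)).toReal =
      (R₁ ^ 2 * arccos (d / R₁) - d * √(R₁ ^ 2 - d ^ 2)) +
      (R₂ ^ 2 * arccos ((r - d) / R₂) - (r - d) * √(R₂ ^ 2 - (r - d) ^ 2)) := by
  obtain ⟨h₁', h₁''⟩ := abs_le.1 h₁
  have hd_lo : r - R₂ ≤ d := by nlinarith
  have hd_hi : d ≤ R₁ := by nlinarith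
  set m : ℝ → ℝ := fun x ↦ min (R₁ ^ 2 - x ^ 2) (R₂ ^ 2 - (x - r) ^ 2)
  have hlens : lens R₁ R₂ r = {p | p.2 ^ 2 ≤ m p.1} := by
    ext p
    simp only [lens, m, mem_ofPred_eq, le_min_iff]
    constructor <;> rintro ⟨h, h'⟩ <;> constructor <;> linarith
  have hm_nonpos : ∀ x ∉ Icc (r - R₂) R₁, m x ≤ 0 := by
    intro x hx
    rcases not_and_or.1 hx with hx | hx <;> rw [not_le] at hx
    · exact (min_le_right _ _).trans (by nlinarith)
    · exact (min_le_left _ _).trans (by nlinarith)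
  have hm_cont : Continuous m := by fun_prop
  have hleft : ∫ x in (r - R₂)..d, 2 * √(m x) = ∫ x in (r - d)..R₂, 2 * √(R₂ ^ 2 - x ^ 2) := by
    have hm : EqOn m (fun x ↦ R₂ ^ 2 - (r - x) ^ 2) (uIcc (r - R₂) d) := by
      intro x hx
      rw [uIcc_of_le hd_lo] at hx
      exact (min_eq_right (by nlinarith [hx.2])).trans (by ring)
    rw [intervalIntegral.integral_congr fun x hx ↦ by rw [hm hx],
      intervalIntegral.integral_comp_sub_left (fun x ↦ 2 * √(R₂ ^ 2 - x ^ 2)), sub_sub_cancel]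
  have hright : ∫ x in d..R₁, 2 * √(m x) = ∫ x in d..R₁, 2 * √(R₁ ^ 2 - x ^ 2) := by
    refine intervalIntegral.integral_congr fun x hx ↦ ?_
    rw [uIcc_of_le hd_hi] at hx
    simp only [m, min_eq_left (by nlinarith [hx.1] : R₁ ^ 2 - x ^ 2 ≤ R₂ ^ 2 - (x - r) ^ 2)]
  have hint := hm_cont.sqrt.const_mul 2 |>.intervalIntegrable (μ := volume)
  rw [hlens, toReal_volume_setOf_snd_sq_le hm_cont (hd_lo.trans hd_hi) hm_nonpos,
    ← intervalIntegral.integral_add_adjacent_intervals (hint _ d) (hint d _), hleft, hright,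
    integral_two_mul_sqrt_sq_sub_sq hR₁ (by linarith) hd_hi,
    integral_two_mul_sqrt_sq_sub_sq hR₂ (by linarith) (by linarith), add_comm]

theorem toReal_volume_lens {R₁ R₂ r : ℝ} (hR₁ : 0 < R₁) (hR₂ : 0 < R₂) (hr : 0 < r)
    (h₁ : |R₁ - R₂| ≤ r) (h₂ : r ≤ R₁ + R₂) :
    (volume (lens R₁ R₂ r)).toReal =
      R₁ ^ 2 * arccos ((r ^ 2 + R₁ ^ 2 - R₂ ^ 2) / (2 * r * R₁)) +
      R₂ ^ 2 * arccos ((r ^ 2 + R₂ ^ 2 - R₁ ^ 2) / (2 * r * R₂)) -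
      √((R₁ + R₂ + r) * (R₁ + R₂ - r) * (R₁ - R₂ + r) * (-R₁ + R₂ + r)) / 2 := by
  set P := (R₁ + R₂ + r) * (R₁ + R₂ - r) * (R₁ - R₂ + r) * (-R₁ + R₂ + r)
  obtain ⟨d, hd⟩ : ∃ d, 2 * r * d = r ^ 2 + R₁ ^ 2 - R₂ ^ 2 :=
    ⟨_, mul_div_cancel₀ _ (by positivity)⟩
  have hradical : R₁ ^ 2 - d ^ 2 = R₂ ^ 2 - (d - r) ^ 2 := by linear_combination -hd
  -- `√P / 4` is Heron's formula for the triangle with sides `R₁, R₂, r`, of height `√(R₁² - d²)`.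
  have hchord₁ : √(R₁ ^ 2 - d ^ 2) = √P / (2 * r) := by
    have hP : R₁ ^ 2 - d ^ 2 = P / (2 * r) ^ 2 := by
      rw [eq_div_iff (by positivity)]
      linear_combination (-(2 * r * d + r ^ 2 + R₁ ^ 2 - R₂ ^ 2)) * hd
    rw [hP, sqrt_div' _ (sq_nonneg _), sqrt_sq (by positivity)]
  have hchord₂ : √(R₂ ^ 2 - (r - d) ^ 2) = √P / (2 * r) := by
    rw [show (r - d) ^ 2 = (d - r) ^ 2 by ring, ← hradical, hchord₁]
  have hcos₁ : d / R₁ = (r ^ 2 + R₁ ^ 2 - R₂ ^ 2) / (2 * r * R₁) := by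
    rw [← hd]; field_simp
  have hcos₂ : (r - d) / R₂ = (r ^ 2 + R₂ ^ 2 - R₁ ^ 2) / (2 * r * R₂) := by
    rw [div_eq_div_iff hR₂.ne' (by positivity)]; linear_combination (-R₂) * hd
  rw [toReal_volume_lens_eq_add hR₁ hR₂ hr h₁ h₂ hradical, hchord₁, hchord₂, hcos₁, hcos₂]
  field_simp
  ring

/-- Area of the intersection of two discs in the plane: if the discs
`b(x₁,R₁)` and `b(x₂,R₂)` have center distance `r` with `|R₁ - R₂| ≤ r ≤ R₁ + R₂`
and `r > 0`, then the Lebesgue area of their intersection is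
`R₁²·arccos((r²+R₁²-R₂²)/(2rR₁)) + R₂²·arccos((r²+R₂²-R₁²)/(2rR₂)) - t/2`. -/
theorem area_inter_discs (R1 R2 : ℝ) (hR1 : 0 < R1) (hR2 : 0 < R2)
    (x1 x2 : EuclideanSpace ℝ (Fin 2)) (r : ℝ) (hr : r = dist x1 x2)
    (h1 : |R1 - R2| ≤ r) (h2 : r ≤ R1 + R2) (h3 : 0 < r) :
    (volume (Metric.closedBall x1 R1 ∩ Metric.closedBall x2 R2)).toReal =
      R1 ^ 2 * Real.arccos ((r ^ 2 + R1 ^ 2 - R2 ^ 2) / (2 * r * R1)) +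
      R2 ^ 2 * Real.arccos ((r ^ 2 + R2 ^ 2 - R1 ^ 2) / (2 * r * R2)) -
      Real.sqrt ((R1 + R2 + r) * (R1 + R2 - r) * (R1 - R2 + r) * (-R1 + R2 + r)) / 2 := by
  have hw : ‖EuclideanSpace.single (0 : Fin 2) r‖ = dist x1 x2 := by
    rw [PiLp.norm_single, Real.norm_of_nonneg h3.le, hr]
  rw [volume_closedBall_inter_closedBall_eq_of_norm_eq hw,
    volume_closedBall_zero_inter_closedBall_single hR1.le hR2.le]
  exact toReal_volume_lens hR1 hR2 h3 h1 h2
end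

section
/- Let σ > 0, let z be a point of the Euclidean plane ℝ² with v = ‖z‖, and let g : ℝ → ℝ≥0 be measurable. Then ∫_{ℝ²} g(‖x‖)·(1/(2πσ²))·exp(−‖x − z‖²/(2σ²)) dx = ∫₀^∞ g(r)·(r/σ²)·exp(−(r² + v²)/(2σ²))·I₀(r v/σ²) dr. In other words, the distance from the origin of a point distributed normally around z with variance σ² has the Rician density f_d(x|v) = (x/σ²)·exp(−(x²+v²)/(2σ²))·I₀(xv/σ²). -/
/-!
Identify the plane isometrically with `ℂ` and pass to polar coordinates `w = r e^{iθ}`.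
Writing `z = v e^{iφ}`, the law of cosines `‖w - z‖² = r² + v² - 2rv cos (θ - φ)` splits the
Gaussian into `exp (-(r² + v²)/(2σ²))` times `exp ((rv/σ²) cos (θ - φ))`, and the integral of the
second factor over a full period in `θ` is `2π I₀(rv/σ²)`, whatever the phase `φ`.
-/

open MeasureTheory Real

noncomputable def besselI0 (t : ℝ) : ℝ :=
  (1 / (2 * π)) * ∫ θ in (0:ℝ)..(2 * π), Real.exp (t * Real.cos θ)

open Set

theorem integral_exp_mul_cos_sub_eq_two_pi_mul_besselI0 (t φ a : ℝ) :
    ∫ θ in a..a + 2 * π, exp (t * cos (θ - φ)) = 2 * π * besselI0 t := by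
  have hper : Function.Periodic (fun θ => exp (t * cos θ)) (2 * π) := fun θ => by
    simp only [cos_add_two_pi]
  rw [intervalIntegral.integral_comp_sub_right (fun θ => exp (t * cos θ)),
    show a + 2 * π - φ = a - φ + 2 * π by ring, hper.intervalIntegral_add_eq (a - φ) 0,
    zero_add, besselI0]
  field_simp

theorem lintegral_Ioo_exp_mul_cos_sub_eq_two_pi_mul_besselI0 (t φ : ℝ) :
    ∫⁻ θ in Ioo (-π) π, ENNReal.ofReal (exp (t * cos (θ - φ))) =
      ENNReal.ofReal (2 * π * besselI0 t) := by
  have hint : IntegrableOn (fun θ => exp (t * cos (θ - φ))) (Ioo (-π) π) :=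
    (Continuous.integrableOn_Icc (by fun_prop)).mono_set Ioo_subset_Icc_self
  have hperiod := integral_exp_mul_cos_sub_eq_two_pi_mul_besselI0 t φ (-π)
  rw [show -π + 2 * π = π by ring] at hperiod
  rw [← ofReal_integral_eq_lintegral_ofReal hint (.of_forall fun _ => (exp_pos _).le),
    ← integral_Ioc_eq_integral_Ioo, ← intervalIntegral.integral_of_le (by linarith [pi_pos]),
    hperiod]

theorem Complex.norm_polarCoord_symm_sub_sq (r θ : ℝ) (z : ℂ) :
    ‖Complex.polarCoord.symm (r, θ) - z‖ ^ 2 =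
      r ^ 2 + ‖z‖ ^ 2 - 2 * (r * ‖z‖) * Real.cos (θ - z.arg) := by
  rw [← Complex.normSq_eq_norm_sq, Complex.normSq_apply, Real.cos_sub]
  simp only [Complex.polarCoord_symm_apply, Complex.sub_re, Complex.sub_im, Complex.mul_re,
    Complex.mul_im, Complex.add_re, Complex.add_im, Complex.ofReal_re, Complex.ofReal_im,
    Complex.I_re, Complex.I_im, ← Complex.norm_mul_cos_arg z, ← Complex.norm_mul_sin_arg z]
  linear_combination r ^ 2 * Real.sin_sq_add_cos_sq θ + ‖z‖ ^ 2 * Real.sin_sq_add_cos_sq z.arg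

theorem lintegral_Ioo_exp_neg_norm_polarCoord_symm_sub_sq (σ r : ℝ) (z : ℂ) :
    ∫⁻ θ in Ioo (-π) π,
        ENNReal.ofReal (exp (-‖Complex.polarCoord.symm (r, θ) - z‖ ^ 2 / (2 * σ ^ 2))) =
      ENNReal.ofReal (2 * π * exp (-(r ^ 2 + ‖z‖ ^ 2) / (2 * σ ^ 2)) *
        besselI0 (r * ‖z‖ / σ ^ 2)) := by
  have hsplit (θ : ℝ) : exp (-‖Complex.polarCoord.symm (r, θ) - z‖ ^ 2 / (2 * σ ^ 2)) =
      exp (-(r ^ 2 + ‖z‖ ^ 2) / (2 * σ ^ 2)) * exp (r * ‖z‖ / σ ^ 2 * cos (θ - z.arg)) := by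
    rw [Complex.norm_polarCoord_symm_sub_sq, ← exp_add]
    ring_nf
  simp_rw [hsplit, ENNReal.ofReal_mul (exp_pos _).le]
  rw [lintegral_const_mul _ (by fun_prop), lintegral_Ioo_exp_mul_cos_sub_eq_two_pi_mul_besselI0,
    ← ENNReal.ofReal_mul (exp_pos _).le]
  ring_nf

theorem Complex.lintegral_norm_mul_eq_lintegral_polar {g : ℝ → ENNReal} {h : ℂ → ENNReal}
    (hg : Measurable g) (hh : Measurable h) :
    ∫⁻ w, g ‖w‖ * h w =
      ∫⁻ r in Ioi 0, ENNReal.ofReal r * g r *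
        ∫⁻ θ in Ioo (-π) π, h (Complex.polarCoord.symm (r, θ)) := by
  have hmeas : Measurable Complex.polarCoord.symm := by
    simp only [funext Complex.polarCoord_symm_apply]; fun_prop
  rw [← Complex.lintegral_comp_polarCoord_symm, polarCoord_target,
    Measure.volume_eq_prod, ← Measure.prod_restrict, lintegral_prod _ (by fun_prop)]
  refine setLIntegral_congr_fun measurableSet_Ioi fun r (hr : 0 < r) => ?_
  simp_rw [Complex.norm_polarCoord_symm, abs_of_pos hr, smul_eq_mul, ← mul_assoc]
  exact lintegral_const_mul _ (by fun_prop)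

theorem rician_distance_density_general (σ : ℝ) (z : EuclideanSpace ℝ (Fin 2))
    (v : ℝ) (hv : v = ‖z‖) (g : ℝ → NNReal) (hg : Measurable g) :
    (∫⁻ x : EuclideanSpace ℝ (Fin 2),
        (g ‖x‖ : ENNReal) *
          ENNReal.ofReal ((1 / (2 * π * σ ^ 2)) * Real.exp (-‖x - z‖ ^ 2 / (2 * σ ^ 2)))) =
      ∫⁻ r in Set.Ioi (0:ℝ),
        (g r : ENNReal) *
          ENNReal.ofReal ((r / σ ^ 2) * Real.exp (-(r ^ 2 + v ^ 2) / (2 * σ ^ 2)) *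
            besselI0 (r * v / σ ^ 2)) := by
  rw [← Complex.orthonormalBasisOneI.measurePreserving_repr.lintegral_comp_emb
    Complex.orthonormalBasisOneI.repr.toHomeomorph.measurableEmbedding]
  set e := Complex.orthonormalBasisOneI.repr
  have hvw : v = ‖e.symm z‖ := hv.trans (e.symm.norm_map z).symm
  have hdist (x : ℂ) : ‖e x - z‖ = ‖x - e.symm z‖ := by
    rw [← e.norm_map (x - e.symm z), map_sub, e.apply_symm_apply]
  simp_rw [LinearIsometryEquiv.norm_map, hdist,
    ENNReal.ofReal_mul (by positivity : (0:ℝ) ≤ 1 / (2 * π * σ ^ 2))]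
  rw [Complex.lintegral_norm_mul_eq_lintegral_polar (g := fun r => (g r : ENNReal))
    hg.coe_nnreal_ennreal (by fun_prop)]
  refine setLIntegral_congr_fun measurableSet_Ioi fun r (hr : 0 < r) => ?_
  have hdensity : ENNReal.ofReal r * ENNReal.ofReal (1 / (2 * π * σ ^ 2)) *
      ENNReal.ofReal (2 * π * exp (-(r ^ 2 + v ^ 2) / (2 * σ ^ 2)) * besselI0 (r * v / σ ^ 2)) =
      ENNReal.ofReal (r / σ ^ 2 * exp (-(r ^ 2 + v ^ 2) / (2 * σ ^ 2)) *
        besselI0 (r * v / σ ^ 2)) := by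
    rw [← ENNReal.ofReal_mul hr.le, ← ENNReal.ofReal_mul (by positivity)]
    congr 1
    field_simp
  rw [lintegral_const_mul' _ _ ENNReal.ofReal_ne_top,
    lintegral_Ioo_exp_neg_norm_polarCoord_symm_sub_sq, ← hvw, ← hdensity]
  ring

/-- The distance from the origin of a point distributed normally (variance `σ²`)
around a center `z` with `‖z‖ = v` has the Rician density
`f_d(r|v) = (r/σ²)·exp(−(r²+v²)/(2σ²))·I₀(rv/σ²)`: for every measurable
`g : ℝ → ℝ≥0`,
`∫_{ℝ²} g(‖x‖)·(1/(2πσ²))·exp(−‖x−z‖²/(2σ²)) dx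
  = ∫₀^∞ g(r)·(r/σ²)·exp(−(r²+v²)/(2σ²))·I₀(rv/σ²) dr`. -/
theorem rician_distance_density (σ : ℝ) (hσ : 0 < σ) (z : EuclideanSpace ℝ (Fin 2))
    (v : ℝ) (hv : v = ‖z‖) (g : ℝ → NNReal) (hg : Measurable g) :
    (∫⁻ x : EuclideanSpace ℝ (Fin 2),
        (g ‖x‖ : ENNReal) *
          ENNReal.ofReal ((1 / (2 * π * σ ^ 2)) * Real.exp (-‖x - z‖ ^ 2 / (2 * σ ^ 2)))) =
      ∫⁻ r in Set.Ioi (0:ℝ),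
        (g r : ENNReal) *
          ENNReal.ofReal ((r / σ ^ 2) * Real.exp (-(r ^ 2 + v ^ 2) / (2 * σ ^ 2)) *
            besselI0 (r * v / σ ^ 2)) :=
  rician_distance_density_general σ z v hv g hg
end

section
/- Let R > 0, let z be a point of the Euclidean plane ℝ² with v = ‖z‖ > 0, and let g : ℝ → ℝ≥0 be measurable. Then ∫_{b(z,R)} g(‖x‖) dx = ∫₀^{max(R−v,0)} 2π u·g(u) du + ∫_{|R−v|}^{R+v} 2u·arccos((u² + v² − R²)/(2 u v))·g(u) du. Equivalently, the distance from the origin of a point uniformly distributed on the disc b(z,R) has density χ⁽¹⁾(u,v) = 2u/R² on 0 ≤ u ≤ R−v (when v ≤ R) and χ⁽²⁾(u,v) = (2u/(πR²))·arccos((u²+v²−R²)/(2uv)) on |R−v| < u ≤ R+v. -/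
/-!
Rotating the plane, which preserves Lebesgue measure and norms, moves the centre to the point
`v > 0` of `ℂ`. By the law of cosines, the circle of radius `u` about `0` meets the disc in the
arc `cos θ ≥ (u² + v² - R²) / (2uv)`, of angular measure `2 arccos ((u² + v² - R²) / (2uv))`,
so polar coordinates and Tonelli turn the integral into a radial one with this weight. The
arccos is `π` for `u < R - v` (whole circle inside the disc) and `0` for `u ≥ R + v` or
`u ≤ v - R` (circle outside the disc), which splits the radial integral as claimed.
-/

open MeasureTheory Real Set

theorem le_cos_iff_le_arccos {c θ : ℝ} (hc : c ≤ 1) (hθ₀ : 0 ≤ θ) (hθπ : θ ≤ π) :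
    c ≤ cos θ ↔ θ ≤ arccos c := by
  constructor
  · intro h
    simpa [arccos_cos hθ₀ hθπ] using antitone_arccos h
  · intro h
    calc c ≤ cos (arccos c) := by
          rcases le_or_gt (-1) c with hc' | hc'
          · rw [cos_arccos hc' hc]
          · linarith [neg_one_le_cos (arccos c)]
      _ ≤ cos θ := cos_le_cos_of_nonneg_of_le_pi hθ₀ (arccos_le_pi c) h

theorem volume_Ioo_inter_setOf_le_cos (c : ℝ) :
    volume (Ioo (-π) π ∩ {θ | c ≤ cos θ}) = ENNReal.ofReal (2 * arccos c) := by
  rcases lt_or_ge 1 c with hc | hc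
  · have : Ioo (-π) π ∩ {θ | c ≤ cos θ} = ∅ :=
      eq_empty_of_forall_notMem fun θ hθ => (cos_le_one θ).not_gt (hc.trans_le hθ.2)
    simp [this, arccos_of_one_le hc.le]
  have hset : Ioo (-π) π ∩ {θ | c ≤ cos θ} = Ioo (-π) π ∩ Icc (-arccos c) (arccos c) := by
    ext θ
    simp only [mem_inter_iff, mem_Ioo, mem_ofPred_eq, mem_Icc, ← abs_le, and_congr_right_iff]
    intro hθ
    rw [← cos_abs, le_cos_iff_le_arccos hc (abs_nonneg θ) (abs_lt.2 hθ).le]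
  have hsub : Icc (-arccos c) (arccos c) ⊆ Icc (-π) π :=
    Icc_subset_Icc (neg_le_neg (arccos_le_pi c)) (arccos_le_pi c)
  calc volume (Ioo (-π) π ∩ {θ | c ≤ cos θ})
      = volume (Icc (-π) π ∩ Icc (-arccos c) (arccos c)) := by
        rw [hset]; exact measure_congr (Ioo_ae_eq_Icc.inter (ae_eq_refl _))
    _ = ENNReal.ofReal (2 * arccos c) := by
        rw [inter_eq_right.2 hsub, volume_Icc]; ring_nf

theorem Complex.lintegral_eq_lintegral_polar {f : ℂ → ENNReal} (hf : Measurable f) :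
    ∫⁻ x, f x = ∫⁻ r in Ioi 0, ENNReal.ofReal r *
      ∫⁻ θ in Ioo (-π) π, f (Complex.polarCoord.symm (r, θ)) := by
  have hsymm : Measurable fun p : ℝ × ℝ => Complex.polarCoord.symm p := by
    simp only [Complex.polarCoord_symm_apply]; fun_prop
  rw [← Complex.lintegral_comp_polarCoord_symm]
  change ∫⁻ p in Ioi 0 ×ˢ Ioo (-π) π, _ = _
  have hprod : Measurable fun p : ℝ × ℝ => ENNReal.ofReal p.1 • f (Complex.polarCoord.symm p) :=
    (ENNReal.measurable_ofReal.comp measurable_fst).smul (hf.comp hsymm)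
  rw [Measure.volume_eq_prod, ← Measure.prod_restrict, lintegral_prod _ hprod.aemeasurable]
  exact lintegral_congr fun r => lintegral_const_mul' _ _ ENNReal.ofReal_ne_top

theorem Complex.dist_polarCoord_symm_ofReal_sq (r θ v : ℝ) :
    dist (Complex.polarCoord.symm (r, θ)) (v : ℂ) ^ 2 = r ^ 2 + v ^ 2 - 2 * r * v * Real.cos θ := by
  rw [Complex.dist_eq, Complex.sq_norm, Complex.normSq_apply]
  simp only [Complex.polarCoord_symm_apply, Complex.sub_re, Complex.sub_im, Complex.add_re,
    Complex.add_im, Complex.mul_re, Complex.mul_im, Complex.ofReal_re, Complex.ofReal_im,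
    Complex.I_re, Complex.I_im]
  linear_combination r ^ 2 * Real.sin_sq_add_cos_sq θ

theorem Complex.polarCoord_symm_mem_closedBall_iff {R v r θ : ℝ} (hR : 0 ≤ R) (hv : 0 < v)
    (hr : 0 < r) :
    Complex.polarCoord.symm (r, θ) ∈ Metric.closedBall (v : ℂ) R ↔
      (r ^ 2 + v ^ 2 - R ^ 2) / (2 * r * v) ≤ Real.cos θ := by
  rw [Metric.mem_closedBall, ← pow_le_pow_iff_left₀ dist_nonneg hR two_ne_zero,
    Complex.dist_polarCoord_symm_ofReal_sq, div_le_iff₀ (by positivity)]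
  constructor <;> intro h <;> linarith

/-- The angle, seen from the origin, of half the arc of the circle of radius `u` about `0` that
lies in the disc of radius `R` about a point at distance `v` (law of cosines). -/
noncomputable def arcHalfAngle (R v u : ℝ) : ℝ := arccos ((u ^ 2 + v ^ 2 - R ^ 2) / (2 * u * v))

theorem setLIntegral_closedBall_ofReal_comp_norm {R v : ℝ} (hR : 0 ≤ R) (hv : 0 < v)
    {f : ℝ → ENNReal} (hf : Measurable f) :
    ∫⁻ x in Metric.closedBall (v : ℂ) R, f ‖x‖ =
      ∫⁻ u in Ioi 0, ENNReal.ofReal (2 * u * arcHalfAngle R v u) * f u := by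
  rw [← lintegral_indicator measurableSet_closedBall,
    Complex.lintegral_eq_lintegral_polar
      (Measurable.indicator (by fun_prop) measurableSet_closedBall)]
  refine setLIntegral_congr_fun measurableSet_Ioi fun r (hr : 0 < r) => ?_
  set c := (r ^ 2 + v ^ 2 - R ^ 2) / (2 * r * v)
  have hslice : ∀ θ, (Metric.closedBall (v : ℂ) R).indicator (fun x => f ‖x‖)
      (Complex.polarCoord.symm (r, θ)) = {θ | c ≤ cos θ}.indicator (fun _ => f r) θ := by
    intro θ
    simp only [indicator, Complex.polarCoord_symm_mem_closedBall_iff hR hv hr,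
      Complex.norm_polarCoord_symm, abs_of_pos hr, mem_ofPred_eq]
    rfl
  have hmeas : MeasurableSet {θ : ℝ | c ≤ cos θ} := measurableSet_le measurable_const measurable_cos
  simp_rw [hslice]
  rw [lintegral_indicator_const hmeas, Measure.restrict_apply hmeas, inter_comm,
    volume_Ioo_inter_setOf_le_cos]
  change _ = ENNReal.ofReal (2 * r * arccos c) * f r
  rw [mul_comm 2 r, mul_assoc, ENNReal.ofReal_mul hr.le]
  ring

theorem arcHalfAngle_eq_pi {R v u : ℝ} (hv : 0 < v) (hu : 0 < u) (h : (u + v) ^ 2 ≤ R ^ 2) :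
    arcHalfAngle R v u = π :=
  arccos_of_le_neg_one <| by rw [div_le_iff₀ (by positivity)]; nlinarith

theorem arcHalfAngle_eq_zero {R v u : ℝ} (hv : 0 < v) (hu : 0 < u) (h : R ^ 2 ≤ (u - v) ^ 2) :
    arcHalfAngle R v u = 0 :=
  arccos_of_one_le <| by rw [le_div_iff₀ (by positivity)]; nlinarith

theorem setLIntegral_Ioc_abs_sub_arcHalfAngle {R v : ℝ} (hR : 0 ≤ R) (hv : 0 < v)
    (f : ℝ → ENNReal) :
    ∫⁻ u in Ioc 0 |R - v|, ENNReal.ofReal (2 * u * arcHalfAngle R v u) * f u =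
      ∫⁻ u in Ioo 0 (max (R - v) 0), ENNReal.ofReal (2 * π * u) * f u := by
  rcases le_or_gt R v with hRv | hvR
  · rw [max_eq_right (by linarith), Ioo_self, Measure.restrict_empty, lintegral_zero_measure,
      abs_of_nonpos (by linarith)]
    refine (setLIntegral_congr_fun measurableSet_Ioc fun u hu => ?_).trans lintegral_zero
    rw [arcHalfAngle_eq_zero hv hu.1 (by nlinarith [hu.2]), mul_zero, ENNReal.ofReal_zero,
      zero_mul]
  · rw [max_eq_left (by linarith), abs_of_pos (by linarith), ← setLIntegral_congr Ioo_ae_eq_Ioc]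
    refine setLIntegral_congr_fun measurableSet_Ioo fun u hu => ?_
    have hu' : u + v ≤ R := by linarith [hu.2]
    rw [arcHalfAngle_eq_pi hv hu.1 (pow_le_pow_left₀ (by linarith [hu.1]) hu' 2), mul_right_comm]

theorem setLIntegral_Ici_add_arcHalfAngle {R v : ℝ} (hR : 0 ≤ R) (hv : 0 < v) (f : ℝ → ENNReal) :
    ∫⁻ u in Ici (R + v), ENNReal.ofReal (2 * u * arcHalfAngle R v u) * f u = 0 := by
  refine (setLIntegral_congr_fun measurableSet_Ici fun u (hu : R + v ≤ u) => ?_).trans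
    lintegral_zero
  rw [arcHalfAngle_eq_zero hv (by linarith) (by nlinarith), mul_zero, ENNReal.ofReal_zero,
    zero_mul]

theorem setLIntegral_Ioi_arcHalfAngle {R v : ℝ} (hR : 0 < R) (hv : 0 < v) (f : ℝ → ENNReal) :
    ∫⁻ u in Ioi 0, ENNReal.ofReal (2 * u * arcHalfAngle R v u) * f u =
      (∫⁻ u in Ioo 0 (max (R - v) 0), ENNReal.ofReal (2 * π * u) * f u) +
        ∫⁻ u in Ioo |R - v| (R + v), ENNReal.ofReal (2 * u * arcHalfAngle R v u) * f u := by
  have hab : |R - v| < R + v := abs_sub_lt_iff.2 ⟨by linarith, by linarith⟩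
  rw [← Ioc_union_Ioi_eq_Ioi (abs_nonneg (R - v)), lintegral_union measurableSet_Ioi
      Ioc_disjoint_Ioi_same, ← Ioo_union_Ici_eq_Ioi hab, lintegral_union measurableSet_Ici
      ((Iio_disjoint_Ici le_rfl).mono_left Ioo_subset_Iio_self),
    setLIntegral_Ici_add_arcHalfAngle hR.le hv, add_zero,
    setLIntegral_Ioc_abs_sub_arcHalfAngle hR.le hv]

theorem LinearIsometryEquiv.setLIntegral_closedBall_comp_norm {E F : Type*}
    [NormedAddCommGroup E] [InnerProductSpace ℝ E] [FiniteDimensional ℝ E] [MeasurableSpace E]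
    [BorelSpace E] [NormedAddCommGroup F] [InnerProductSpace ℝ F] [FiniteDimensional ℝ F]
    [MeasurableSpace F] [BorelSpace F] (e : E ≃ₗᵢ[ℝ] F) (f : ℝ → ENNReal) (x : E) (R : ℝ) :
    ∫⁻ y in Metric.closedBall (e x) R, f ‖y‖ = ∫⁻ y in Metric.closedBall x R, f ‖y‖ := by
  rw [← e.measurePreserving.setLIntegral_comp_preimage_emb e.toMeasurableEquiv.measurableEmbedding,
    e.preimage_closedBall, e.symm_apply_apply]
  simp only [e.norm_map]

theorem exists_linearIsometryEquiv_complex_apply_norm {E : Type*} [NormedAddCommGroup E]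
    [InnerProductSpace ℝ E] (hE : Module.finrank ℝ E = 2) (z : E) :
    ∃ e : ℂ ≃ₗᵢ[ℝ] E, e ‖z‖ = z := by
  have : FiniteDimensional ℝ E := .of_finrank_pos (by omega)
  let e₀ : ℂ ≃ₗᵢ[ℝ] E := Complex.orthonormalBasisOneI.repr.trans
    ((stdOrthonormalBasis ℝ E).reindex (finCongr hE)).repr.symm
  let w := e₀.symm z
  refine ⟨(rotation (Circle.exp (Complex.arg w))).trans e₀, ?_⟩
  have hw : Circle.exp (Complex.arg w) * (‖z‖ : ℂ) = w := by
    rw [Circle.coe_exp, mul_comm, ← e₀.symm.norm_map, Complex.norm_mul_exp_arg_mul_I]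
  simp only [LinearIsometryEquiv.trans_apply, rotation_apply, hw, w, e₀.apply_symm_apply]

/-- The distance from the origin of a point uniformly distributed on the disc
`b(z,R)` has density `χ⁽¹⁾(u,v) = 2u/R²` (times `πR²`, here stated unnormalized)
on `0 ≤ u ≤ R−v` and `χ⁽²⁾(u,v) = (2u/(πR²))·arccos((u²+v²−R²)/(2uv))` on
`|R−v| < u ≤ R+v`: for every measurable `g : ℝ → ℝ≥0`,
`∫_{b(z,R)} g(‖x‖) dx = ∫₀^{max(R−v,0)} 2πu·g(u) du
  + ∫_{|R−v|}^{R+v} 2u·arccos((u²+v²−R²)/(2uv))·g(u) du`. -/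
theorem matern_distance_density (R : ℝ) (hR : 0 < R) (z : EuclideanSpace ℝ (Fin 2))
    (v : ℝ) (hv : v = ‖z‖) (hv0 : 0 < v) (g : ℝ → NNReal) (hg : Measurable g) :
    (∫⁻ x in Metric.closedBall z R, (g ‖x‖ : ENNReal)) =
      (∫⁻ u in Set.Ioo (0:ℝ) (max (R - v) 0),
          ENNReal.ofReal (2 * π * u) * (g u : ENNReal)) +
      ∫⁻ u in Set.Ioo |R - v| (R + v),
          ENNReal.ofReal (2 * u * Real.arccos ((u ^ 2 + v ^ 2 - R ^ 2) / (2 * u * v))) *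
            (g u : ENNReal) := by
  obtain ⟨e, he⟩ := exists_linearIsometryEquiv_complex_apply_norm finrank_euclideanSpace_fin z
  rw [← hv] at he
  rw [← he, e.setLIntegral_closedBall_comp_norm (fun u => (g u : ENNReal)),
    setLIntegral_closedBall_ofReal_comp_norm hR.le hv0 hg.coe_nnreal_ennreal,
    setLIntegral_Ioi_arcHalfAngle hR hv0]
  rfl
end

section
/- Let (Ω, 𝔉, P) be a probability space, let X : Ω → ℝ be a nonnegative random variable (the SIR) and L : Ω → ℕ a random variable (the load) such that X and L are independent and P(L > 0) > 0. Let W, ρ, R_b > 0. Then P( min((W/L)·log₂(1 + X), R_b/L) > ρ | L > 0 ) = (1/P(L > 0)) · Σ_{n ≥ 1, n·ρ < R_b} P( X > 2^{nρ/W} − 1 ) · P(L = n). -/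
open MeasureTheory ProbabilityTheory

/-- Rate coverage decomposition: if the SIR `X` and the load `L` are independent,
then the conditional probability (given `L > 0`) that the per-user rate
`min((W/L)·log₂(1+X), R_b/L)` exceeds `ρ` equals
`(1/P(L>0))·Σ_{n ≥ 1, nρ < R_b} P(X > 2^{nρ/W} − 1)·P(L = n)`. -/
theorem rate_coverage_decomposition {Ω : Type*} [MeasurableSpace Ω] (P : Measure Ω)
    [IsProbabilityMeasure P] (X : Ω → ℝ) (L : Ω → ℕ)
    (hX : Measurable X) (hL : Measurable L) (hXnonneg : ∀ ω, 0 ≤ X ω)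
    (hindep : IndepFun X L P) (hLpos : 0 < P {ω | 0 < L ω})
    (W ρ Rb : ℝ) (hW : 0 < W) (hρ : 0 < ρ) (hRb : 0 < Rb) :
    P[|{ω | 0 < L ω}]
        {ω | ρ < min (W / (L ω : ℝ) * Real.logb 2 (1 + X ω)) (Rb / (L ω : ℝ))} =
      (P {ω | 0 < L ω})⁻¹ *
        ∑' n : ℕ, if 1 ≤ n ∧ (n : ℝ) * ρ < Rb then
          P {ω | (2 : ℝ) ^ ((n : ℝ) * ρ / W) - 1 < X ω} * P {ω | L ω = n}
        else 0 := by
  classical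
  set s : Set Ω := {ω | 0 < L ω} with hs_def
  set t : Set Ω :=
    {ω | ρ < min (W / (L ω : ℝ) * Real.logb 2 (1 + X ω)) (Rb / (L ω : ℝ))} with ht_def
  have hs : MeasurableSet s := by
    have : s = L ⁻¹' (Set.Ioi 0) := rfl
    rw [this]; exact hL measurableSet_Ioi
  have ht : MeasurableSet t := by
    have hLr : Measurable fun ω => (L ω : ℝ) := measurable_from_nat.comp hL
    have hmeas : Measurable fun ω =>
        min (W / (L ω : ℝ) * Real.logb 2 (1 + X ω)) (Rb / (L ω : ℝ)) := by
      apply Measurable.min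
      · exact (measurable_const.div hLr).mul
          (((Real.measurable_log.comp (measurable_const.add hX)).div measurable_const))
      · exact measurable_const.div hLr
    exact measurableSet_lt measurable_const hmeas
  rw [ProbabilityTheory.cond_apply hs]
  congr 1
  -- decompose s ∩ t over values of L
  have hunion : s ∩ t = ⋃ n : ℕ, ((s ∩ t) ∩ {ω | L ω = n}) := by
    ext ω; simp [Set.mem_iUnion]
  have hdisj : Pairwise (Function.onFun Disjoint fun n : ℕ => (s ∩ t) ∩ {ω | L ω = n}) := by
    intro m n hmn
    apply Set.disjoint_left.mpr
    rintro ω ⟨-, h1⟩ ⟨-, h2⟩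
    exact hmn (h1.symm.trans h2)
  have hmeasn : ∀ n : ℕ, MeasurableSet ((s ∩ t) ∩ {ω | L ω = n}) := fun n =>
    (hs.inter ht).inter (hL (measurableSet_singleton n))
  rw [hunion, measure_iUnion hdisj hmeasn]
  apply tsum_congr
  intro n
  by_cases hcond : 1 ≤ n ∧ (n : ℝ) * ρ < Rb
  · obtain ⟨hn1, hnRb⟩ := hcond
    have hn0 : (0 : ℝ) < (n : ℝ) := by exact_mod_cast hn1
    have hset : (s ∩ t) ∩ {ω | L ω = n} =
        X ⁻¹' Set.Ioi ((2 : ℝ) ^ ((n : ℝ) * ρ / W) - 1) ∩ L ⁻¹' {n} := by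
      ext ω
      simp only [Set.mem_inter_iff, Set.mem_setOf_eq, Set.mem_preimage, Set.mem_Ioi,
        Set.mem_singleton_iff, hs_def, ht_def, lt_min_iff]
      constructor
      · rintro ⟨⟨-, h1, -⟩, hLn⟩
        refine ⟨?_, hLn⟩
        rw [hLn] at h1
        have key : (n : ℝ) * ρ / W < Real.logb 2 (1 + X ω) := by
          rw [div_lt_iff₀ hW]
          rw [div_mul_eq_mul_div, lt_div_iff₀ hn0] at h1
          nlinarith
        have hy : (0 : ℝ) < 1 + X ω := by have := hXnonneg ω; linarith
        rw [Real.lt_logb_iff_rpow_lt one_lt_two hy] at key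
        linarith
      · rintro ⟨hXω, hLn⟩
        have hy : (0 : ℝ) < 1 + X ω := by have := hXnonneg ω; linarith
        have key : (n : ℝ) * ρ / W < Real.logb 2 (1 + X ω) := by
          rw [Real.lt_logb_iff_rpow_lt one_lt_two hy]
          linarith
        rw [div_lt_iff₀ hW] at key
        refine ⟨⟨by rw [hLn]; exact_mod_cast hn1, ?_, ?_⟩, hLn⟩
        · rw [hLn, div_mul_eq_mul_div, lt_div_iff₀ hn0]
          nlinarith
        · rw [hLn, lt_div_iff₀ hn0]
          nlinarith
    rw [hset, hindep.measure_inter_preimage_eq_mul _ _ measurableSet_Ioi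
      (measurableSet_singleton n), if_pos ⟨hn1, hnRb⟩]
    rfl
  · rw [if_neg hcond]
    have hset : (s ∩ t) ∩ {ω | L ω = n} = ∅ := by
      ext ω
      simp only [Set.mem_inter_iff, Set.mem_setOf_eq, Set.mem_empty_iff_false, iff_false,
        not_and, hs_def, ht_def, lt_min_iff]
      rintro ⟨hpos, -, h2⟩ hLn
      rw [hLn] at hpos h2
      apply hcond
      refine ⟨hpos, ?_⟩
      have hn0 : (0 : ℝ) < (n : ℝ) := by exact_mod_cast hpos
      rw [lt_div_iff₀ hn0] at h2
      nlinarith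
    rw [hset, measure_empty]
end
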